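/- arXiv:1007.2492 — 2 statements merged into one kernel-verified Lean document; each statement's English description precedes it below -/
import Mathlib

section
/- Let Φ : {(z₁,z₂) ∈ ℝ² : z₁² + z₂² < 1} × ℝ₊* → M₂(ℝ) be the map sending (z₁, z₂, z₃) to the matrix (z₃/(1 - z₁² - z₂²)) · [[(1+z₁)² + z₂², 2z₂], [2z₂, (1-z₁)² + z₂²]]. Then Φ is a bijection from the product of the open unit disc in ℝ² with the positive reals onto the set SDP(2) of 2×2 real symmetric positive definite matrices. -/
/-!
Write `k = t / (1 - |z|²)` and `a, b, c` for the entries of `Φ(z, t)`. Then `ac - b² = t²`,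
`a + c + 2t = 4k`, `a - c = 4k z₁` and `b = 2k z₂`, so `t = √(det T)` and `z` is read off the
entries after dividing by `tr T + 2√(det T)`. Conversely these formulas send any positive definite
`T` into the disc times `ℝ₊*`, and positive definiteness of `!![a, b; b, c]` is just `a > 0` and
`ac - b² > 0`.
-/

open Matrix
/-- The set of 2×2 real symmetric positive definite matrices. -/
def SDP2 : Set (Matrix (Fin 2) (Fin 2) ℝ) :=
  {T | T.IsSymm ∧ ∀ x : Fin 2 → ℝ, x ≠ 0 → 0 < x ⬝ᵥ (T *ᵥ x)}

lemma Matrix.isSymm_of_fin_two {α : Type*} (a b c : α) : !![a, b; b, c].IsSymm := by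
  ext i j
  fin_cases i <;> fin_cases j <;> rfl

lemma Matrix.IsSymm.apply_one_zero {α : Type*} {T : Matrix (Fin 2) (Fin 2) α} (hT : T.IsSymm) :
    T 1 0 = T 0 1 :=
  hT.apply 0 1

lemma Matrix.IsSymm.eq_of_fin_two {α : Type*} {T : Matrix (Fin 2) (Fin 2) α} (hT : T.IsSymm) :
    T = !![T 0 0, T 0 1; T 0 1, T 1 1] :=
  (eta_fin_two T).trans (by rw [hT.apply_one_zero])

lemma Matrix.IsSymm.det_eq_fin_two {R : Type*} [CommRing R] {T : Matrix (Fin 2) (Fin 2) R}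
    (hT : T.IsSymm) : T.det = T 0 0 * T 1 1 - T 0 1 ^ 2 := by
  rw [Matrix.det_fin_two, hT.apply_one_zero, sq]

lemma Matrix.IsSymm.dotProduct_mulVec_fin_two {R : Type*} [CommRing R]
    {T : Matrix (Fin 2) (Fin 2) R} (hT : T.IsSymm) (x : Fin 2 → R) :
    x ⬝ᵥ (T *ᵥ x) = T 0 0 * x 0 ^ 2 + 2 * T 0 1 * x 0 * x 1 + T 1 1 * x 1 ^ 2 := by
  simp only [vec2_dotProduct, mulVec, hT.apply_one_zero]
  ring

theorem mem_SDP2_iff {T : Matrix (Fin 2) (Fin 2) ℝ} :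
    T ∈ SDP2 ↔ T.IsSymm ∧ 0 < T 0 0 ∧ 0 < T.det := by
  refine ⟨fun ⟨hT, hpos⟩ => ⟨hT, ?_⟩, fun ⟨hT, ha, hdet⟩ => ⟨hT, fun x hx => ?_⟩⟩
  all_goals simp only [hT.det_eq_fin_two, hT.dotProduct_mulVec_fin_two] at *
  · have ha : 0 < T 0 0 := by simpa using hpos ![1, 0] (by simp)
    refine ⟨ha, pos_of_mul_pos_right (a := T 0 0) ?_ ha.le⟩
    -- `q(b, -a) = a · det T`
    have hq := hpos ![T 0 1, -T 0 0] (by simp [ha.ne'])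
    simp only [cons_val_zero, cons_val_one] at hq
    linear_combination hq
  · -- completing the square: `a q(x) = (a x₀ + b x₁)² + (det T) x₁²`
    refine pos_of_mul_pos_right (a := T 0 0) ?_ ha.le
    rcases eq_or_ne (x 1) 0 with h1 | h1
    · have h0 : x 0 ≠ 0 := fun h0 => hx (funext fun i => by fin_cases i <;> assumption)
      simp only [h1]
      ring_nf
      positivity
    · nlinarith [mul_pos hdet (sq_pos_of_ne_zero h1), sq_nonneg (T 0 0 * x 0 + T 0 1 * x 1)]

lemma exists_eq_of_mem_SDP2 {T : Matrix (Fin 2) (Fin 2) ℝ} (hT : T ∈ SDP2) :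
    ∃ a b c : ℝ, 0 < a ∧ 0 < a * c - b ^ 2 ∧ T = !![a, b; b, c] := by
  obtain ⟨hsymm, ha, hdet⟩ := mem_SDP2_iff.1 hT
  exact ⟨T 0 0, T 0 1, T 1 1, ha, hsymm.det_eq_fin_two ▸ hdet, hsymm.eq_of_fin_two⟩

noncomputable def diskToSDP2 (p : ℝ × ℝ × ℝ) : Matrix (Fin 2) (Fin 2) ℝ :=
  (p.2.2 / (1 - p.1 ^ 2 - p.2.1 ^ 2)) •
    !![(1 + p.1) ^ 2 + p.2.1 ^ 2, 2 * p.2.1; 2 * p.2.1, (1 - p.1) ^ 2 + p.2.1 ^ 2]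

noncomputable def SDP2ToDisk (T : Matrix (Fin 2) (Fin 2) ℝ) : ℝ × ℝ × ℝ :=
  ((T 0 0 - T 1 1) / (T.trace + 2 * √T.det), 2 * T 0 1 / (T.trace + 2 * √T.det), √T.det)

section diskToSDP2

variable {z₁ z₂ t : ℝ} (hz : z₁ ^ 2 + z₂ ^ 2 ≠ 1)
include hz

lemma det_diskToSDP2 : (diskToSDP2 (z₁, z₂, t)).det = t ^ 2 := by
  have : 1 - z₁ ^ 2 - z₂ ^ 2 ≠ 0 := fun h => hz (by linarith)
  simp only [diskToSDP2, det_smul, Fintype.card_fin, det_fin_two_of]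
  field_simp
  ring

lemma trace_add_two_mul_diskToSDP2 :
    (diskToSDP2 (z₁, z₂, t)).trace + 2 * t = 4 * (t / (1 - z₁ ^ 2 - z₂ ^ 2)) := by
  have : 1 - z₁ ^ 2 - z₂ ^ 2 ≠ 0 := fun h => hz (by linarith)
  simp only [diskToSDP2, trace_smul, trace_fin_two_of, smul_eq_mul]
  field_simp
  ring

lemma SDP2ToDisk_diskToSDP2 (ht : 0 < t) : SDP2ToDisk (diskToSDP2 (z₁, z₂, t)) = (z₁, z₂, t) := by
  have : 1 - z₁ ^ 2 - z₂ ^ 2 ≠ 0 := fun h => hz (by linarith)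
  rw [SDP2ToDisk, det_diskToSDP2 hz, Real.sqrt_sq ht.le, trace_add_two_mul_diskToSDP2 hz]
  simp only [diskToSDP2, Matrix.smul_apply, of_apply, cons_val', cons_val_zero, cons_val_one,
    empty_val', cons_val_fin_one, smul_eq_mul, Prod.mk.injEq, and_true]
  constructor <;> field_simp <;> ring

end diskToSDP2

lemma diskToSDP2_mem {z₁ z₂ t : ℝ} (hz : z₁ ^ 2 + z₂ ^ 2 < 1) (ht : 0 < t) :
    diskToSDP2 (z₁, z₂, t) ∈ SDP2 := by
  have hk : 0 < t / (1 - z₁ ^ 2 - z₂ ^ 2) := div_pos ht (by linarith)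
  have h00 : 0 < (1 + z₁) ^ 2 + z₂ ^ 2 := by nlinarith
  refine mem_SDP2_iff.2 ⟨(isSymm_of_fin_two ..).smul _, ?_, ?_⟩
  · simp only [diskToSDP2, Matrix.smul_apply, of_apply, cons_val', cons_val_zero, empty_val',
      cons_val_fin_one, smul_eq_mul]
    positivity
  · rw [det_diskToSDP2 hz.ne]
    positivity

lemma SDP2ToDisk_of_fin_two (a b c : ℝ) :
    SDP2ToDisk !![a, b; b, c] =
      ((a - c) / (a + c + 2 * √(a * c - b ^ 2)), 2 * b / (a + c + 2 * √(a * c - b ^ 2)),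
        √(a * c - b ^ 2)) := by
  simp [SDP2ToDisk, det_fin_two_of, trace_fin_two_of, sq]

lemma pos_of_mul_sub_sq_pos {a b c : ℝ} (ha : 0 ≤ a) (h : 0 < a * c - b ^ 2) : 0 < c :=
  pos_of_mul_pos_right (by nlinarith [sq_nonneg b]) ha

section SDP2ToDisk

variable {a b c : ℝ} (ha : 0 < a) (hdet : 0 < a * c - b ^ 2)
include ha hdet

lemma one_sub_sq_SDP2ToDisk :
    1 - (SDP2ToDisk !![a, b; b, c]).1 ^ 2 - (SDP2ToDisk !![a, b; b, c]).2.1 ^ 2 =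
      4 * √(a * c - b ^ 2) / (a + c + 2 * √(a * c - b ^ 2)) := by
  have hc := pos_of_mul_sub_sq_pos ha.le hdet
  have hd := Real.sq_sqrt hdet.le
  rw [SDP2ToDisk_of_fin_two]
  field_simp
  linear_combination (-4) * hd

lemma SDP2ToDisk_mem :
    SDP2ToDisk !![a, b; b, c] ∈ {p : ℝ × ℝ × ℝ | p.1 ^ 2 + p.2.1 ^ 2 < 1 ∧ 0 < p.2.2} := by
  have hc := pos_of_mul_sub_sq_pos ha.le hdet
  have hd : 0 < √(a * c - b ^ 2) := Real.sqrt_pos.2 hdet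
  have hr : 0 < 4 * √(a * c - b ^ 2) / (a + c + 2 * √(a * c - b ^ 2)) := by positivity
  rw [← one_sub_sq_SDP2ToDisk ha hdet] at hr
  exact ⟨by linarith, by simpa only [SDP2ToDisk_of_fin_two] using hd⟩

lemma diskToSDP2_SDP2ToDisk : diskToSDP2 (SDP2ToDisk !![a, b; b, c]) = !![a, b; b, c] := by
  have hc := pos_of_mul_sub_sq_pos ha.le hdet
  have hd0 : 0 < √(a * c - b ^ 2) := Real.sqrt_pos.2 hdet
  have hd := Real.sq_sqrt hdet.le
  rw [diskToSDP2, one_sub_sq_SDP2ToDisk ha hdet, SDP2ToDisk_of_fin_two]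
  ext i j
  fin_cases i <;> fin_cases j <;>
    simp only [Fin.zero_eta, Fin.mk_one, Fin.isValue, Matrix.smul_apply, of_apply, cons_val',
      cons_val_zero, cons_val_one, cons_val_fin_one, smul_eq_mul] <;>
    field_simp
  · linear_combination 4 * hd
  · ring
  · ring
  · linear_combination 4 * hd

end SDP2ToDisk

/-- the map Φ is a bijection from (open unit disc) × ℝ₊* onto SDP(2). -/
theorem stmt_0 :
    Set.BijOn
      (fun p : ℝ × ℝ × ℝ =>
        (p.2.2 / (1 - p.1 ^ 2 - p.2.1 ^ 2)) •
          !![(1 + p.1) ^ 2 + p.2.1 ^ 2, 2 * p.2.1;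
             2 * p.2.1, (1 - p.1) ^ 2 + p.2.1 ^ 2])
      {p : ℝ × ℝ × ℝ | p.1 ^ 2 + p.2.1 ^ 2 < 1 ∧ 0 < p.2.2}
      SDP2 := by
  refine Set.InvOn.bijOn (f := diskToSDP2) (f' := SDP2ToDisk) ⟨?_, ?_⟩ ?_ ?_
  · rintro ⟨z₁, z₂, t⟩ ⟨hz, ht⟩
    exact SDP2ToDisk_diskToSDP2 hz.ne ht
  · intro T hT
    obtain ⟨a, b, c, ha, hdet, rfl⟩ := exists_eq_of_mem_SDP2 hT
    exact diskToSDP2_SDP2ToDisk ha hdet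
  · rintro ⟨z₁, z₂, t⟩ ⟨hz, ht⟩
    exact diskToSDP2_mem hz ht
  · intro T hT
    obtain ⟨a, b, c, ha, hdet, rfl⟩ := exists_eq_of_mem_SDP2 hT
    exact SDP2ToDisk_mem ha hdet
end

section
/- For every pair of complex numbers α, β with |α|² − |β|² = 1, there exist real numbers φ, t, s such that the matrix [[α, β], [conj(β), conj(α)]] equals the product [[e^{iφ/2}, 0], [0, e^{−iφ/2}]] · [[cosh(t/2), sinh(t/2)], [sinh(t/2), cosh(t/2)]] · [[1+is, −is], [is, 1−is]]. -/
/-!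
Put `u = α + β`. In a factorisation `k a n` the sum of the top-row entries is `e^{iφ/2} e^{t/2}`,
so `φ` and `t` are read off from the polar form of `u`. The remaining parameter comes from
`(α - β) · conj u`: its real part is `|α|² - |β|² = 1` and its imaginary part is `2 s |u|²`.
-/

open Complex ComplexConjugate

theorem Matrix.iwasawa_factors_mul {R : Type*} [CommRing R] (k k' c d x : R) :
    !![k, 0; 0, k'] * !![c, d; d, c] * !![1 + x, -x; x, 1 - x] =
      !![k * (c + x * (c + d)), k * (d - x * (c + d));
         k' * (d + x * (c + d)), k' * (c - x * (c + d))] := by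
  rw [Matrix.mul_fin_two, Matrix.mul_fin_two]
  ext i j
  fin_cases i <;> fin_cases j <;>
    simp only [Fin.zero_eta, Fin.mk_one, Matrix.of_apply, Matrix.cons_val', Matrix.cons_val_zero,
      Matrix.cons_val_one, Matrix.cons_val_fin_one] <;>
    ring

namespace Complex

theorem re_sub_mul_conj_add (α β : ℂ) :
    ((α - β) * conj (α + β)).re = ‖α‖ ^ 2 - ‖β‖ ^ 2 := by
  simp only [mul_re, sub_re, sub_im, map_add, add_re, add_im, conj_re, conj_im, Complex.sq_norm,
    normSq_apply]
  ring

theorem exists_iwasawa_coords {α β : ℂ} (h : ‖α‖ ^ 2 - ‖β‖ ^ 2 = 1) :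
    ∃ φ t s : ℝ, α = exp (I * φ / 2) * (Real.cosh (t / 2) + I * s * Real.exp (t / 2)) ∧
      β = exp (I * φ / 2) * (Real.sinh (t / 2) - I * s * Real.exp (t / 2)) := by
  set u := α + β
  set ρ := ‖u‖
  set w := (α - β) * conj u
  have hw_re : w.re = 1 := by rw [re_sub_mul_conj_add, h]
  have hu : u ≠ 0 := by
    rintro hu
    simp [w, hu] at hw_re
  have hρ : 0 < ρ := norm_pos_iff.mpr hu
  have hρ' : (ρ : ℂ) ≠ 0 := by exact_mod_cast hρ.ne'
  set s := w.im / (2 * ρ ^ 2)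
  have hw : w = 1 + 2 * I * s * ρ ^ 2 := by
    rw [← re_add_im w, hw_re]
    simp only [s]
    push_cast
    field_simp
  have hnorm : u * conj u = (ρ : ℂ) ^ 2 := by
    rw [mul_conj, ← Complex.sq_norm]
    norm_cast
  have he : exp (I * (2 * arg u : ℝ) / 2) = u / ρ := by
    rw [eq_div_iff hρ']
    calc _ = ρ * exp (arg u * I) := by push_cast; ring_nf
      _ = u := norm_mul_exp_arg_mul_I u
  refine ⟨2 * arg u, 2 * Real.log ρ, s, ?_⟩
  simp only [mul_div_cancel_left₀ _ (two_ne_zero' ℝ), Real.cosh_log hρ, Real.sinh_log hρ,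
    Real.exp_log hρ, he]
  push_cast
  -- `2α = u + (α - β)`, `2β = u - (α - β)` and `|u|² (α - β) = u w`
  constructor
  · field_simp
    linear_combination (α + β) * hw - (α - β) * hnorm
  · field_simp
    linear_combination (α - β) * hnorm - (α + β) * hw

end Complex

/-- Iwasawa decomposition SU(1,1) = K·A·N. -/
theorem stmt_3 (α β : ℂ) (h : ‖α‖ ^ 2 - ‖β‖ ^ 2 = 1) :
    ∃ φ t s : ℝ,
      !![α, β; (starRingEnd ℂ) β, (starRingEnd ℂ) α] =
        !![Complex.exp (I * φ / 2), 0; 0, Complex.exp (-(I * φ / 2))] *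
        !![(Real.cosh (t / 2) : ℂ), (Real.sinh (t / 2) : ℂ);
           (Real.sinh (t / 2) : ℂ), (Real.cosh (t / 2) : ℂ)] *
        !![1 + I * s, -(I * s); I * s, 1 - I * s] := by
  obtain ⟨φ, t, s, hα, hβ⟩ := exists_iwasawa_coords h
  refine ⟨φ, t, s, ?_⟩
  have hk : conj (exp (I * φ / 2)) = exp (-(I * φ / 2)) := by
    rw [← exp_conj]
    simp [map_ofNat, neg_div]
  rw [Matrix.iwasawa_factors_mul, ← ofReal_add, Real.cosh_add_sinh, hα, hβ]
  simp only [map_mul, map_add, map_sub, hk, conj_ofReal, conj_I, neg_mul, sub_neg_eq_add,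
    ← sub_eq_add_neg]
end
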